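/- For every links system L and each j ∈ {1,…,k−1}, let g = 1+(j−1)k/2 (the largest index i such that N_i ∩ Q_j = ∅) and h = 1+j·k/2 (the smallest index i such that Q_j ⊆ N_i). Then, as vectors in ℝ^L, χ^{δ_L(Q_j)} − χ^{δ_L(N_h)} + χ^{δ_L(N_g)} = 2·χ^{L'}, where L' = δ_L(Q_j) ∩ δ_L(N_g); moreover |L'| = k/2. -/

import Mathlib

/-!
Write `g = 1 + (j-1)k/2` and `h = 1 + jk/2`, so that `Q_j = {g+1, …, h}` and `N_h` is the
disjoint union of `Q_j` and `N_g`; the vector identity is then a case check on the two endpoints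
of a link. A link lies in `δ(Q_j) ∩ δ(N_g)` exactly when it joins a node `≤ g` to a node of
`Q_j`. Each path `P_i` climbs from `1` to `n > g`, so it has exactly one link crossing `g`, and
that link ends in `Q_j` iff `P_i` meets `Q_j` at all. Distinct paths have disjoint sets of
internal nodes, so these links are distinct, and `|L'|` is the number of paths meeting `Q_j`,
which the meeting pattern fixes at `k/2`.
-/

open Finset

namespace CoverSmallCuts

/-- `nn k` is the number `n = 2 + k(k-1)/2` of nodes. -/
def nn (k : ℕ) : ℕ := 2 + k * (k - 1) / 2

/-- `mm k` is the number `m = k(k-1)/2 + k` of links. -/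
def mm (k : ℕ) : ℕ := k * (k - 1) / 2 + k

/-- The nested set `N_i = {1, …, i}`. -/
def Nset (i : ℕ) : Finset ℕ := Finset.Icc 1 i

/-- The Q-set `Q_j = {2+(j-1)k/2, …, 1+j·k/2}`. -/
def Qset (k j : ℕ) : Finset ℕ := Finset.Icc (2 + (j - 1) * (k / 2)) (1 + j * (k / 2))

/-- Capacity of the path edge `{i, i+1}` of the capacitated graph `G`. -/
def pathCap (k i : ℕ) : ℕ :=
  if i = 1 ∨ i = nn k - 1 then 2
  else if ∃ j ∈ Finset.Icc 1 (k - 1), i ∈ Qset k j ∧ i + 1 ∈ Qset k j then 3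
  else 1

/-- Capacity of the cut `δ(S)` in the capacitated graph `G`: the sum of the capacities
of the edges of `G` with exactly one endpoint in `S`. -/
def cutCap (k : ℕ) (S : Finset ℕ) : ℕ :=
  (∑ i ∈ Finset.Icc 1 (nn k - 1),
      if (i ∈ S) ↔ ((i + 1) ∈ S) then 0 else pathCap k i)
  + (∑ j ∈ Finset.Icc 1 (k - 1),
      if ((1 + (j - 1) * (k / 2)) ∈ S) ↔ ((2 + j * (k / 2)) ∈ S) then 0 else 1)

/-- A links system: the `s,t`-paths `P_1, …, P_{k-1}` are recorded by the function
`node`, where `node i t` is the `t`-th node of the path `P_i` (for `1 ≤ i ≤ k-1` and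
`0 ≤ t ≤ k/2 + 1`); the class `P_k` consists of the single link `{1, n}`. -/
structure LinksSystem (k : ℕ) where
  node : ℕ → ℕ → ℕ
  /-- each path `P_i` starts at `s = 1` -/
  node_first : ∀ i ∈ Finset.Icc 1 (k - 1), node i 0 = 1
  /-- each path `P_i` ends at `t = n` -/
  node_last : ∀ i ∈ Finset.Icc 1 (k - 1), node i (k / 2 + 1) = nn k
  /-- node indices strictly increase along each path -/
  node_mono : ∀ i ∈ Finset.Icc 1 (k - 1), ∀ t ≤ k / 2, node i t < node i (t + 1)
  /-- every node in `{2, …, n-1}` is an internal node of exactly one of `P_1, …, P_{k-1}` -/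
  cover : ∀ v ∈ Finset.Icc 2 (nn k - 1),
      ∃! i, i ∈ Finset.Icc 1 (k - 1) ∧ ∃ t ∈ Finset.Icc 1 (k / 2), node i t = v
  /-- `P_i` has an internal node in `Q_j` iff
  `(i ≤ j ≤ min(i+k/2-1, k-1))` or `(j < i and j ≤ i-k/2)` -/
  meetsQ : ∀ i ∈ Finset.Icc 1 (k - 1), ∀ j ∈ Finset.Icc 1 (k - 1),
      ((∃ t ∈ Finset.Icc 1 (k / 2), node i t ∈ Qset k j) ↔
        ((i ≤ j ∧ j ≤ min (i + k / 2 - 1) (k - 1)) ∨ (j < i ∧ j ≤ i - k / 2)))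

/-- The class `P_i` of links: the edge set of the path `P_i` for `i < k`,
and `{{1, n}}` for `i = k`. -/
def LinksSystem.P {k : ℕ} (LS : LinksSystem k) (i : ℕ) : Finset (Sym2 ℕ) :=
  if i = k then {s(1, nn k)}
  else (Finset.Icc 0 (k / 2)).image fun t => s(LS.node i t, LS.node i (t + 1))

/-- The set `L` of all links. -/
def LinksSystem.links {k : ℕ} (LS : LinksSystem k) : Finset (Sym2 ℕ) :=
  (Finset.Icc 1 k).biUnion LS.P

open scoped Classical in
/-- `deltaL F S` is `δ_F(S)`: the set of links of `F` with exactly one endpoint in `S`. -/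
noncomputable def deltaL (F : Finset (Sym2 ℕ)) (S : Finset ℕ) : Finset (Sym2 ℕ) :=
  F.filter fun e => ∃ a b, e = s(a, b) ∧ a ∈ S ∧ b ∉ S

/-- The 0-1 indicator vector `χ^F` of a set `F` of links. -/
noncomputable def chi (F : Finset (Sym2 ℕ)) : Sym2 ℕ → ℝ :=
  fun e => if e ∈ F then 1 else 0

theorem mem_deltaL_mk {F : Finset (Sym2 ℕ)} {S : Finset ℕ} {a b : ℕ} :
    s(a, b) ∈ deltaL F S ↔ s(a, b) ∈ F ∧ (a ∈ S ↔ b ∉ S) := by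
  simp only [deltaL, mem_filter, Sym2.eq_iff]
  constructor
  · rintro ⟨hF, x, y, (⟨rfl, rfl⟩ | ⟨rfl, rfl⟩), hx, hy⟩ <;> exact ⟨hF, by tauto⟩
  · rintro ⟨hF, hab⟩
    refine ⟨hF, ?_⟩
    by_cases ha : a ∈ S
    · exact ⟨a, b, by tauto⟩
    · exact ⟨b, a, by tauto⟩

open scoped Classical in
theorem deltaL_subset (F : Finset (Sym2 ℕ)) (S : Finset ℕ) : deltaL F S ⊆ F :=
  filter_subset _ _

theorem chi_deltaL_sub_add (F : Finset (Sym2 ℕ)) {Q N : Finset ℕ} (hQN : Disjoint Q N)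
    (e : Sym2 ℕ) :
    chi (deltaL F Q) e - chi (deltaL F (Q ∪ N)) e + chi (deltaL F N) e
      = 2 * chi (deltaL F Q ∩ deltaL F N) e := by
  induction e using Sym2.ind with
  | _ a b =>
  have ha : a ∈ Q → a ∉ N := fun h => disjoint_left.mp hQN h
  have hb : b ∈ Q → b ∉ N := fun h => disjoint_left.mp hQN h
  simp only [chi, mem_inter, mem_deltaL_mk, mem_union]
  by_cases hF : s(a, b) ∈ F <;> by_cases haQ : a ∈ Q <;> by_cases hbQ : b ∈ Q <;>
    by_cases haN : a ∈ N <;> by_cases hbN : b ∈ N <;> simp_all [one_add_one_eq_two]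

theorem Nset_inter_Icc_eq_empty_iff {g h i : ℕ} (hgh : g < h) :
    Nset i ∩ Icc (g + 1) h = ∅ ↔ i ≤ g := by
  rw [← not_nonempty_iff_eq_empty, not_iff_comm, not_le]
  constructor
  · intro hi
    exact ⟨g + 1, by simp only [Nset, mem_inter, mem_Icc]; omega⟩
  · rintro ⟨a, ha⟩
    simp only [Nset, mem_inter, mem_Icc] at ha
    omega

theorem Icc_subset_Nset_iff {g h i : ℕ} (hgh : g < h) : Icc (g + 1) h ⊆ Nset i ↔ h ≤ i := by
  simp only [Nset]
  rw [Icc_subset_Icc_iff (by omega)]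
  omega

theorem Icc_union_Nset {g h : ℕ} (hgh : g ≤ h) : Icc (g + 1) h ∪ Nset g = Nset h := by
  ext a
  simp only [Nset, mem_union, mem_Icc]
  omega

theorem disjoint_Icc_Nset (g h : ℕ) : Disjoint (Icc (g + 1) h) (Nset g) := by
  rw [disjoint_left]
  intro a ha hb
  simp only [Nset, mem_Icc] at ha hb
  omega

theorem Qset_eq_Icc (k j : ℕ) :
    Qset k j = Icc (1 + (j - 1) * (k / 2) + 1) (1 + j * (k / 2)) := by
  rw [Qset, add_right_comm]

theorem mem_deltaL_Icc_inter_deltaL_Nset {F : Finset (Sym2 ℕ)} {g h a b : ℕ} (hab : a ≤ b) :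
    s(a, b) ∈ deltaL F (Icc (g + 1) h) ∩ deltaL F (Nset g) ↔
      s(a, b) ∈ F ∧ 1 ≤ a ∧ a ≤ g ∧ g < b ∧ b ≤ h := by
  simp only [mem_inter, mem_deltaL_mk, Nset, mem_Icc, iff_iff_and_or_not_and_not]
  by_cases hF : s(a, b) ∈ F
  · simp only [hF, true_and]
    omega
  · simp [hF]

theorem card_filter_meetsQ {k j : ℕ} (hke : Even k) (hj : j ∈ Icc 1 (k - 1)) :
    ((Icc 1 (k - 1)).filter fun i =>
      (i ≤ j ∧ j ≤ min (i + k / 2 - 1) (k - 1)) ∨ (j < i ∧ j ≤ i - k / 2)).card = k / 2 := by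
  obtain ⟨r, rfl⟩ := hke
  rw [mem_Icc] at hj
  have hsplit : ((Icc 1 (r + r - 1)).filter fun i =>
      (i ≤ j ∧ j ≤ min (i + (r + r) / 2 - 1) (r + r - 1)) ∨ (j < i ∧ j ≤ i - (r + r) / 2))
      = Icc (max 1 (j + 1 - r)) j ∪ Icc (j + r) (r + r - 1) := by
    ext i
    simp only [mem_filter, mem_union, mem_Icc]
    omega
  rw [hsplit, card_union_of_disjoint, Nat.card_Icc, Nat.card_Icc]
  · omega
  · rw [disjoint_left]
    intro a ha hb
    simp only [mem_Icc] at ha hb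
    omega

theorem exists_crossing {f : ℕ → ℕ} {g : ℕ} (h0 : f 0 ≤ g) :
    ∀ {n : ℕ}, g < f n → ∃ t < n, f t ≤ g ∧ g < f (t + 1)
  | 0, hn => absurd h0 hn.not_ge
  | n + 1, hn => by
    by_cases hfn : g < f n
    · obtain ⟨t, htn, ht⟩ := exists_crossing h0 hfn
      exact ⟨t, by omega, ht⟩
    · exact ⟨n, by omega, not_lt.mp hfn, hn⟩

theorem MonotoneOn.crossing_unique {f : ℕ → ℕ} {g n t t' : ℕ} (hf : MonotoneOn f (Set.Iic n))
    (ht : t < n) (ht' : t' < n) (hgt : f t ≤ g ∧ g < f (t + 1))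
    (hgt' : f t' ≤ g ∧ g < f (t' + 1)) : t = t' := by
  by_contra hne
  rcases Nat.lt_or_gt_of_ne hne with hlt | hlt
  · have := hf (show t + 1 ∈ Set.Iic n by simp; omega) (show t' ∈ Set.Iic n by simp; omega) hlt
    omega
  · have := hf (show t' + 1 ∈ Set.Iic n by simp; omega) (show t ∈ Set.Iic n by simp; omega) hlt
    omega

namespace LinksSystem

variable {k : ℕ} (LS : LinksSystem k) {i : ℕ}

theorem strictMonoOn_node (hi : i ∈ Icc 1 (k - 1)) :
    StrictMonoOn (LS.node i) (Set.Iic (k / 2 + 1)) :=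
  strictMonoOn_Iic_of_lt_succ fun t ht => LS.node_mono i hi t (Nat.lt_succ_iff.mp ht)

theorem node_mem_Icc (hi : i ∈ Icc 1 (k - 1)) {t : ℕ} (ht : t ∈ Icc 1 (k / 2)) :
    LS.node i t ∈ Icc 2 (nn k - 1) := by
  rw [mem_Icc] at ht ⊢
  have hmono := LS.strictMonoOn_node hi
  have h0 : LS.node i 0 < LS.node i t := hmono (by simp) (by simp; omega) (by omega)
  have hn : LS.node i t < LS.node i (k / 2 + 1) := hmono (by simp; omega) (by simp) (by omega)
  rw [LS.node_first i hi] at h0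
  rw [LS.node_last i hi] at hn
  omega

theorem eq_of_node_eq {i' t t' : ℕ} (hi : i ∈ Icc 1 (k - 1)) (hi' : i' ∈ Icc 1 (k - 1))
    (ht : t ∈ Icc 1 (k / 2)) (ht' : t' ∈ Icc 1 (k / 2)) (h : LS.node i t = LS.node i' t') :
    i = i' :=
  (LS.cover _ (LS.node_mem_Icc hi ht)).unique ⟨hi, t, ht, rfl⟩ ⟨hi', t', ht', h.symm⟩

theorem link_mem_links (hi : i ∈ Icc 1 (k - 1)) {t : ℕ} (ht : t ≤ k / 2) :
    s(LS.node i t, LS.node i (t + 1)) ∈ LS.links := by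
  rw [mem_Icc] at hi
  rw [links, mem_biUnion]
  refine ⟨i, mem_Icc.mpr ⟨hi.1, by omega⟩, ?_⟩
  rw [P, if_neg (by omega)]
  exact mem_image_of_mem _ (mem_Icc.mpr ⟨t.zero_le, ht⟩)

theorem eq_or_exists_of_mem_links {e : Sym2 ℕ} (he : e ∈ LS.links) :
    e = s(1, nn k) ∨ ∃ i ∈ Icc 1 (k - 1), ∃ t ≤ k / 2, e = s(LS.node i t, LS.node i (t + 1)) := by
  rw [links, mem_biUnion] at he
  obtain ⟨i, hi, he⟩ := he
  rw [P] at he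
  split_ifs at he with hik
  · exact Or.inl (mem_singleton.mp he)
  · obtain ⟨t, ht, rfl⟩ := mem_image.mp he
    rw [mem_Icc] at hi ht
    exact Or.inr ⟨i, mem_Icc.mpr ⟨hi.1, by omega⟩, t, ht.2, rfl⟩

theorem le_of_node_lt_nn (hi : i ∈ Icc 1 (k - 1)) {t : ℕ} (ht : t ≤ k / 2 + 1)
    (hlt : LS.node i t < nn k) : t ≤ k / 2 := by
  by_contra! htk
  rw [show t = k / 2 + 1 by omega, LS.node_last i hi] at hlt
  exact lt_irrefl _ hlt

theorem meets_Icc_iff {g h c : ℕ} (hi : i ∈ Icc 1 (k - 1)) (hhn : h < nn k) (hc : c ≤ k / 2)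
    (hgc : LS.node i c ≤ g ∧ g < LS.node i (c + 1)) :
    (∃ t ∈ Icc 1 (k / 2), LS.node i t ∈ Icc (g + 1) h) ↔ LS.node i (c + 1) ≤ h := by
  have hmono := (LS.strictMonoOn_node hi).monotoneOn
  constructor
  · rintro ⟨t, ht, hgt⟩
    rw [mem_Icc] at ht hgt
    have hct : c < t := by
      by_contra! htc
      have := hmono (by simp; omega) (by simp; omega) htc
      omega
    have := hmono (by simp; omega) (by simp; omega) (show c + 1 ≤ t by omega)
    omega
  · intro hch
    have hck : c + 1 ≤ k / 2 := LS.le_of_node_lt_nn hi (by omega) (by omega)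
    exact ⟨c + 1, mem_Icc.mpr ⟨by omega, hck⟩, mem_Icc.mpr ⟨hgc.2, hch⟩⟩

theorem existsUnique_crossing (hi : i ∈ Icc 1 (k - 1)) {g : ℕ} (hg : 1 ≤ g) (hgn : g < nn k) :
    ∃! c, c ≤ k / 2 ∧ LS.node i c ≤ g ∧ g < LS.node i (c + 1) := by
  have h0 : LS.node i 0 ≤ g := by rw [LS.node_first i hi]; exact hg
  have hn : g < LS.node i (k / 2 + 1) := by rw [LS.node_last i hi]; exact hgn
  obtain ⟨c, hc, hgc⟩ := exists_crossing h0 hn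
  refine ⟨c, ⟨Nat.lt_succ_iff.mp hc, hgc⟩, fun c' ⟨hc', hgc'⟩ => ?_⟩
  exact MonotoneOn.crossing_unique (LS.strictMonoOn_node hi).monotoneOn (by omega) hc hgc' hgc

theorem card_deltaL_Icc_inter_deltaL_Nset {g h : ℕ} (hg : 1 ≤ g) (hgh : g ≤ h) (hhn : h < nn k) :
    (deltaL LS.links (Icc (g + 1) h) ∩ deltaL LS.links (Nset g)).card =
      ((Icc 1 (k - 1)).filter fun i => ∃ t ∈ Icc 1 (k / 2), LS.node i t ∈ Icc (g + 1) h).card := by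
  choose! c hc hc_unique using
    fun i (hi : i ∈ Icc 1 (k - 1)) => LS.existsUnique_crossing hi hg (by omega)
  symm
  refine card_bij (fun i _ => s(LS.node i (c i), LS.node i (c i + 1))) ?_ ?_ ?_
  · intro i hi
    obtain ⟨hi, hmeet⟩ := mem_filter.mp hi
    obtain ⟨hck, hcg, hgc⟩ := hc i hi
    have hch := (LS.meets_Icc_iff hi hhn hck ⟨hcg, hgc⟩).mp hmeet
    have h1 : 1 ≤ LS.node i (c i) := by
      rw [← LS.node_first i hi]
      exact (LS.strictMonoOn_node hi).monotoneOn (by simp) (by simp; omega) (Nat.zero_le _)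
    rw [mem_deltaL_Icc_inter_deltaL_Nset (LS.node_mono i hi _ hck).le]
    exact ⟨LS.link_mem_links hi hck, h1, hcg, hgc, hch⟩
  · intro i hi i' hi' heq
    obtain ⟨hi, hmeet⟩ := mem_filter.mp hi
    obtain ⟨hi', hmeet'⟩ := mem_filter.mp hi'
    obtain ⟨hck, hcg, hgc⟩ := hc i hi
    obtain ⟨hck', hcg', hgc'⟩ := hc i' hi'
    have hch := (LS.meets_Icc_iff hi hhn hck ⟨hcg, hgc⟩).mp hmeet
    have hch' := (LS.meets_Icc_iff hi' hhn hck' ⟨hcg', hgc'⟩).mp hmeet'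
    have hup : LS.node i (c i + 1) = LS.node i' (c i' + 1) := by
      rw [Sym2.eq_iff] at heq
      omega
    refine LS.eq_of_node_eq hi hi' (mem_Icc.mpr ⟨by omega, ?_⟩) (mem_Icc.mpr ⟨by omega, ?_⟩) hup
    · exact LS.le_of_node_lt_nn hi (by omega) (by omega)
    · exact LS.le_of_node_lt_nn hi' (by omega) (by omega)
  · intro e he
    rcases LS.eq_or_exists_of_mem_links (deltaL_subset _ _ (mem_inter.mp he).1) with
      rfl | ⟨i, hi, t, ht, rfl⟩
    · rw [mem_deltaL_Icc_inter_deltaL_Nset (by rw [nn]; omega)] at he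
      omega
    · rw [mem_deltaL_Icc_inter_deltaL_Nset (LS.node_mono i hi t ht).le] at he
      obtain ⟨-, -, htg, hgt, hth⟩ := he
      obtain rfl := hc_unique i hi t ⟨ht, htg, hgt⟩
      exact ⟨i, mem_filter.mpr ⟨hi, (LS.meets_Icc_iff hi hhn ht ⟨htg, hgt⟩).mpr hth⟩, rfl⟩

end LinksSystem

theorem one_add_mul_half_lt_nn {k j : ℕ} (hj : j ≤ k - 1) : 1 + j * (k / 2) < nn k := by
  have : j * (k / 2) ≤ (k - 1) * k / 2 :=
    (Nat.mul_le_mul_right _ hj).trans (Nat.mul_div_le_mul_div_assoc _ _ _)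
  rw [nn, mul_comm k]
  omega

/-- for every links system `L` and each `j ∈ {1, …, k-1}`, letting
`g = 1+(j-1)k/2` (the largest index `i` with `N_i ∩ Q_j = ∅`) and `h = 1+j·k/2`
(the smallest index `i` with `Q_j ⊆ N_i`), we have
`χ^{δ_L(Q_j)} - χ^{δ_L(N_h)} + χ^{δ_L(N_g)} = 2·χ^{L'}` where
`L' = δ_L(Q_j) ∩ δ_L(N_g)`; moreover `|L'| = k/2`. -/
theorem statement9 (k : ℕ) (hk : 4 ≤ k) (hke : Even k) (LS : LinksSystem k) :
    ∀ j ∈ Finset.Icc 1 (k - 1),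
      (∀ i : ℕ, Nset i ∩ Qset k j = ∅ ↔ i ≤ 1 + (j - 1) * (k / 2)) ∧
      (∀ i : ℕ, Qset k j ⊆ Nset i ↔ 1 + j * (k / 2) ≤ i) ∧
      (∀ e : Sym2 ℕ,
        chi (deltaL LS.links (Qset k j)) e
            - chi (deltaL LS.links (Nset (1 + j * (k / 2)))) e
            + chi (deltaL LS.links (Nset (1 + (j - 1) * (k / 2)))) e
          = 2 * chi (deltaL LS.links (Qset k j) ∩
                deltaL LS.links (Nset (1 + (j - 1) * (k / 2)))) e) ∧
      (deltaL LS.links (Qset k j) ∩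
          deltaL LS.links (Nset (1 + (j - 1) * (k / 2)))).card = k / 2 := by
  intro j hj
  have hj' := mem_Icc.mp hj
  have hgh : 1 + (j - 1) * (k / 2) < 1 + j * (k / 2) :=
    Nat.add_lt_add_left (Nat.mul_lt_mul_of_pos_right (by omega) (by omega)) 1
  rw [Qset_eq_Icc]
  refine ⟨fun i => Nset_inter_Icc_eq_empty_iff hgh, fun i => Icc_subset_Nset_iff hgh,
    fun e => ?_, ?_⟩
  · rw [← Icc_union_Nset hgh.le]
    exact chi_deltaL_sub_add _ (disjoint_Icc_Nset _ _) e
  · have hhn := one_add_mul_half_lt_nn hj'.2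
    rw [LS.card_deltaL_Icc_inter_deltaL_Nset (Nat.le_add_right 1 _) hgh.le hhn, ← Qset_eq_Icc,
      filter_congr fun i hi => LS.meetsQ i hi j hj]
    exact card_filter_meetsQ hke hj

end CoverSmallCuts
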